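/- arXiv:2410.11312 — 5 statements merged into one kernel-verified Lean document; each statement's English description precedes it below -/
import Mathlib

section
/- Let f^U : ℝ^m × ℝ^n → ℝ be continuously differentiable, let f^L : ℝ^m × ℝ^n → ℝ be twice continuously differentiable, and let g : ℝ^m → ℝ^n be a differentiable function such that for every x, g(x) is a global minimizer of y ↦ f^L(x, y). For (x, y) let G(x, y) ∈ ℝ^n be the gradient of y' ↦ f^L(x, y') at y, let f^L_YY(x, y) : ℝ^n → ℝ^n be the derivative of y' ↦ G(x, y') at y, and let f^L_XY(x, y) : ℝ^m → ℝ^n be the derivative of x' ↦ G(x', y) at x. Assume f^L_YY(x, g(x)) is invertible for every x. Then the function F(x) = f^U(x, g(x)) is differentiable and ∇F(x) = ∇_x f^U(x, g(x)) - (f^L_XY(x, g(x)))* ((f^L_YY(x, g(x)))⁻¹ ∇_y f^U(x, g(x))), where ∇_x f^U and ∇_y f^U are the gradients of f^U in its first and second arguments and (·)* denotes the adjoint with respect to the Euclidean inner products. -/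
/-!
Differentiating the first-order condition `∇_y f^L (x, g x) = 0` along `x ↦ (x, g x)` gives
`f^L_XY + f^L_YY ∘ Dg = 0`, so `Dg = -(f^L_YY)⁻¹ ∘ f^L_XY`. The chain rule gives
`∇F = ∇_x f^U + (Dg)* ∇_y f^U`, and the Hessian `f^L_YY` is self-adjoint (symmetry of second
derivatives), hence so is its inverse.
-/

open InnerProductSpace ContinuousLinearMap Filter Topology

section ChainRule

variable {𝕜 E F G : Type*} [NontriviallyNormedField 𝕜]
  [NormedAddCommGroup E] [NormedSpace 𝕜 E] [NormedAddCommGroup F] [NormedSpace 𝕜 F]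
  [NormedAddCommGroup G] [NormedSpace 𝕜 G]

theorem DifferentiableAt.fderiv_comp_prodMk_left {f : E × F → G} {x : E} {y : F}
    (hf : DifferentiableAt 𝕜 f (x, y)) :
    fderiv 𝕜 (fun x' => f (x', y)) x = fderiv 𝕜 f (x, y) ∘L inl 𝕜 E F :=
  (hf.hasFDerivAt.comp x (hasFDerivAt_prodMk_left x y)).fderiv

theorem DifferentiableAt.fderiv_comp_prodMk_right {f : E × F → G} {x : E} {y : F}
    (hf : DifferentiableAt 𝕜 f (x, y)) :
    fderiv 𝕜 (fun y' => f (x, y')) y = fderiv 𝕜 f (x, y) ∘L inr 𝕜 E F :=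
  (hf.hasFDerivAt.comp y (hasFDerivAt_prodMk_right x y)).fderiv

theorem DifferentiableAt.fderiv_comp_prodMk_id {f : E × F → G} {g : E → F} {x : E}
    (hf : DifferentiableAt 𝕜 f (x, g x)) (hg : DifferentiableAt 𝕜 g x) :
    fderiv 𝕜 (fun x' => f (x', g x')) x
      = fderiv 𝕜 (fun x' => f (x', g x)) x
        + fderiv 𝕜 (fun y => f (x, y)) (g x) ∘L fderiv 𝕜 g x := by
  have hchain : HasFDerivAt (fun x' => f (x', g x'))
      (fderiv 𝕜 f (x, g x) ∘L (ContinuousLinearMap.id 𝕜 E).prod (fderiv 𝕜 g x)) x :=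
    hf.hasFDerivAt.comp x ((hasFDerivAt_id x).prodMk hg.hasFDerivAt)
  rw [hchain.fderiv, hf.fderiv_comp_prodMk_left, hf.fderiv_comp_prodMk_right]
  ext v
  simp [← map_add]

theorem fderiv_eq_neg_symm_comp_of_eventually_eq_zero {Φ : E × F → G} {g : E → F} {x : E}
    (hΦ : DifferentiableAt 𝕜 Φ (x, g x)) (hg : DifferentiableAt 𝕜 g x)
    (hzero : ∀ᶠ x' in 𝓝 x, Φ (x', g x') = 0) (A : F ≃L[𝕜] G)
    (hA : (A : F →L[𝕜] G) = fderiv 𝕜 (fun y => Φ (x, y)) (g x)) :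
    fderiv 𝕜 g x = -((A.symm : G →L[𝕜] F) ∘L fderiv 𝕜 (fun x' => Φ (x', g x)) x) := by
  have hsum :
      fderiv 𝕜 (fun x' => Φ (x', g x)) x + (A : F →L[𝕜] G) ∘L fderiv 𝕜 g x = 0 := by
    have hconst : (fun x' => Φ (x', g x')) =ᶠ[𝓝 x] fun _ => 0 := hzero
    rw [hA, ← hΦ.fderiv_comp_prodMk_id hg, hconst.fderiv_eq, fderiv_const_apply]
  rw [← comp_neg, ← eq_neg_of_add_eq_zero_right hsum, ← comp_assoc,
    ContinuousLinearEquiv.coe_symm_comp_coe, id_comp]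

end ChainRule

section Adjoint

variable {𝕜 E F : Type*} [RCLike 𝕜]
  [NormedAddCommGroup E] [InnerProductSpace 𝕜 E] [CompleteSpace E]
  [NormedAddCommGroup F] [InnerProductSpace 𝕜 F] [CompleteSpace F]

theorem InnerProductSpace.toDual_symm_comp (L : StrongDual 𝕜 F) (T : E →L[𝕜] F) :
    (toDual 𝕜 E).symm (L ∘L T) = adjoint T ((toDual 𝕜 F).symm L) :=
  ext_inner_right 𝕜 fun v => by
    rw [toDual_symm_apply, adjoint_inner_left, toDual_symm_apply, comp_apply]

theorem DifferentiableAt.gradient_comp_prodMk_id {f : E × F → 𝕜} {g : E → F} {x : E}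
    (hf : DifferentiableAt 𝕜 f (x, g x)) (hg : DifferentiableAt 𝕜 g x) :
    gradient (fun x' => f (x', g x')) x
      = gradient (fun x' => f (x', g x)) x
        + adjoint (fderiv 𝕜 g x) (gradient (fun y => f (x, y)) (g x)) := by
  simp only [gradient, hf.fderiv_comp_prodMk_id hg, map_add, toDual_symm_comp]

theorem ContinuousLinearEquiv.isSelfAdjoint_symm {A : F ≃L[𝕜] F}
    (hA : IsSelfAdjoint (A : F →L[𝕜] F)) : IsSelfAdjoint (A.symm : F →L[𝕜] F) := by
  rw [isSelfAdjoint_iff_isSymmetric] at hA ⊢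
  intro a b
  simpa using (hA (A.symm a) (A.symm b)).symm

end Adjoint

section RealGradient

variable {F : Type*} [NormedAddCommGroup F] [InnerProductSpace ℝ F] [CompleteSpace F]

theorem IsLocalMin.gradient_eq_zero {f : F → ℝ} {a : F} (h : IsLocalMin f a) :
    gradient f a = 0 := by
  rw [gradient, h.fderiv_eq_zero, map_zero]

theorem ContDiff.contDiff_gradient_snd {E : Type*} [NormedAddCommGroup E] [NormedSpace ℝ E]
    {f : E × F → ℝ} {k : WithTop ℕ∞} (hf : ContDiff ℝ (k + 1) f) :
    ContDiff ℝ k (fun p : E × F => gradient (fun y => f (p.1, y)) p.2) := by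
  have hfd : Differentiable ℝ f := hf.differentiable (by simp)
  have hgrad : (fun p : E × F => gradient (fun y => f (p.1, y)) p.2)
      = fun p => (toDual ℝ F).symm (fderiv ℝ f p ∘L inr ℝ E F) := by
    funext p
    exact congrArg (toDual ℝ F).symm (hfd p).fderiv_comp_prodMk_right
  rw [hgrad]
  exact (toDual ℝ F).symm.contDiff.comp ((hf.fderiv_right le_rfl).clm_comp contDiff_const)

theorem ContDiffAt.isSelfAdjoint_fderiv_gradient {f : F → ℝ} {y : F}
    (hf : ContDiffAt ℝ 2 f y) :
    IsSelfAdjoint (fderiv ℝ (gradient f) y) := by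
  have hH : gradient f = (toDual ℝ F).symm ∘ fderiv ℝ f := rfl
  rw [isSelfAdjoint_iff_isSymmetric, hH, (toDual ℝ F).symm.comp_fderiv]
  intro u v
  rw [real_inner_comm _ u]
  calc _ = fderiv ℝ (fderiv ℝ f) y u v := toDual_symm_apply
    _ = fderiv ℝ (fderiv ℝ f) y v u := hf.isSymmSndFDerivAt (by simp) u v
    _ = _ := toDual_symm_apply.symm

end RealGradient

/-- **Bilevel hypergradient formula.** If `g x` globally minimizes
`y ↦ f^L (x, y)` and the lower-level Hessian `f^L_YY (x, g x)` is invertible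
(witnessed by the continuous linear equivalence `A x`), then
`F x = f^U (x, g x)` is differentiable with
`∇F(x) = ∇_x f^U - (f^L_XY)* ((f^L_YY)⁻¹ ∇_y f^U)` at `(x, g x)`. -/
theorem bilevel_hypergradient {m n : ℕ}
    (fU : EuclideanSpace ℝ (Fin m) × EuclideanSpace ℝ (Fin n) → ℝ)
    (hfU : ContDiff ℝ 1 fU)
    (fL : EuclideanSpace ℝ (Fin m) × EuclideanSpace ℝ (Fin n) → ℝ)
    (hfL : ContDiff ℝ 2 fL)
    (g : EuclideanSpace ℝ (Fin m) → EuclideanSpace ℝ (Fin n))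
    (hg : Differentiable ℝ g)
    (hmin : ∀ x y, fL (x, g x) ≤ fL (x, y))
    (A : EuclideanSpace ℝ (Fin m) →
      (EuclideanSpace ℝ (Fin n) ≃L[ℝ] EuclideanSpace ℝ (Fin n)))
    (hA : ∀ x, ((A x : EuclideanSpace ℝ (Fin n) →L[ℝ] EuclideanSpace ℝ (Fin n)))
      = fderiv ℝ (fun y' => gradient (fun y'' => fL (x, y'')) y') (g x)) :
    Differentiable ℝ (fun x => fU (x, g x))
    ∧ ∀ x : EuclideanSpace ℝ (Fin m),
      gradient (fun x' => fU (x', g x')) x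
        = gradient (fun x' => fU (x', g x)) x
          - ContinuousLinearMap.adjoint
              (fderiv ℝ (fun x' => gradient (fun y'' => fL (x', y'')) (g x)) x)
              ((A x).symm (gradient (fun y' => fU (x, y')) (g x))) := by
  have hfUd : Differentiable ℝ fU := hfU.differentiable one_ne_zero
  refine ⟨hfUd.comp (differentiable_id.prodMk hg), fun x => ?_⟩
  have hG : ContDiff ℝ 1 (fun p : _ × _ => gradient (fun y => fL (p.1, y)) p.2) :=
    hfL.contDiff_gradient_snd
  have hDg := fderiv_eq_neg_symm_comp_of_eventually_eq_zero
    (hG.differentiable one_ne_zero _) (hg x)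
    (Eventually.of_forall fun x' => IsLocalMin.gradient_eq_zero (Eventually.of_forall (hmin x')))
    (A x) (hA x)
  have hHessInv : IsSelfAdjoint (A x).symm.toContinuousLinearMap := by
    refine ContinuousLinearEquiv.isSelfAdjoint_symm ?_
    rw [hA x]
    exact (hfL.comp (contDiff_const.prodMk contDiff_id)).contDiffAt.isSelfAdjoint_fderiv_gradient
  rw [(hfUd _).gradient_comp_prodMk_id (hg x), hDg, map_neg, adjoint_comp, hHessInv.adjoint_eq,
    sub_eq_add_neg, neg_apply, comp_apply]
  rfl
end

section
/- Consider an n-level hierarchical system: an integer n ≥ 2, continuously differentiable functions G_i : ℝ^{i-1} → ℝ for 2 ≤ i ≤ n, and trajectory functions X_1, ..., X_n : ℝ → ℝ defined by X_1(t) = t and X_i(t) = G_i(X_1(t), ..., X_{i-1}(t)); write ∂x_i/∂x_j(t) for the j-th partial derivative of G_i evaluated at (X_1(t), ..., X_{i-1}(t)). Suppose there are K ≥ 0 and S ≥ 0 such that every partial derivative of every G_i is bounded in absolute value by K everywhere, and for all 2 ≤ i ≤ n and 1 ≤ j < i the map t ↦ ∂x_i/∂x_j(t) is S-Lipschitz;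 set J = max(K, 1). Then for all y, z ∈ ℝ and every 2 ≤ i ≤ n, |X_i'(y) - X_i'(z)| ≤ (i-1) S ((i-1) J)^{i-1} |y - z|. -/
/-!
Induct on the level, proving together the bound `|X_i'| ≤ ((i-1) J)^(i-1)` and the Lipschitz
estimate. By the chain rule `X_i' = ∑_{j<i} X_j' · ∂x_i/∂x_j`; if the higher levels satisfy
`|X_j'| ≤ B` and `X_j'` is `L`-Lipschitz, then `|X_i'| ≤ (i-1) B J` and `X_i'` is
`(i-1) (B S + L J)`-Lipschitz. With `B = ((i-2) J)^(i-2)` and `L = (i-2) S B` this gives the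
claimed constants, since `J ≥ 1`.
-/

open Finset

theorem abs_mul_sub_mul_le {R : Type*} [CommRing R] [LinearOrder R] [IsStrictOrderedRing R]
    (a b c d : R) : |a * b - c * d| ≤ |a| * |b - d| + |a - c| * |d| := by
  calc |a * b - c * d| = |a * (b - d) + (a - c) * d| := by ring_nf
    _ ≤ |a * (b - d)| + |(a - c) * d| := abs_add_le _ _
    _ = |a| * |b - d| + |a - c| * |d| := by rw [abs_mul, abs_mul]

theorem monotone_natCast_mul_pow_self {J : ℝ} (hJ : 1 ≤ J) :
    Monotone fun a : ℕ => ((a : ℝ) * J) ^ a := by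
  refine monotone_nat_of_le_succ fun a => ?_
  rcases Nat.eq_zero_or_pos a with rfl | ha
  · simpa using hJ
  · have h1 : (1 : ℝ) ≤ (a : ℝ) * J := one_le_mul_of_one_le_of_one_le (by exact_mod_cast ha) hJ
    calc ((a : ℝ) * J) ^ a ≤ ((a + 1 : ℕ) * J) ^ a := by gcongr; simp
      _ ≤ ((a + 1 : ℕ) * J) ^ (a + 1) := by
        refine pow_le_pow_right₀ (h1.trans ?_) a.le_succ
        gcongr; simp

section CompPi

variable {ι : Type*} [Fintype ι] [DecidableEq ι] {G : (ι → ℝ) → ℝ} {x : ι → ℝ → ℝ}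

theorem deriv_comp_pi (hG : Differentiable ℝ G) (hx : ∀ k, Differentiable ℝ (x k)) (t : ℝ) :
    deriv (fun s => G fun k => x k s) t =
      ∑ k, deriv (x k) t * fderiv ℝ G (fun j => x j t) (Pi.single k 1) := by
  have hchain : HasDerivAt (fun s => G fun k => x k s) _ t :=
    (hG _).hasFDerivAt.comp_hasDerivAt t (hasDerivAt_pi.2 fun k => (hx k t).hasDerivAt)
  rw [hchain.deriv, pi_eq_sum_univ' fun k => deriv (x k) t, map_sum]
  simp only [map_smul, smul_eq_mul]

variable {B L J S : ℝ}

theorem abs_deriv_comp_pi_le (hG : Differentiable ℝ G) (hx : ∀ k, Differentiable ℝ (x k))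
    (hxB : ∀ k t, |deriv (x k) t| ≤ B)
    (hGJ : ∀ k t, |fderiv ℝ G (fun j => x j t) (Pi.single k 1)| ≤ J) (t : ℝ) :
    |deriv (fun s => G fun k => x k s) t| ≤ Fintype.card ι * (B * J) := by
  rw [deriv_comp_pi hG hx, ← nsmul_eq_mul, ← Finset.card_univ]
  refine (abs_sum_le_sum_abs _ _).trans (sum_le_card_nsmul _ _ _ fun k _ => ?_)
  rw [abs_mul]
  exact mul_le_mul (hxB k t) (hGJ k t) (abs_nonneg _) ((abs_nonneg _).trans (hxB k t))

theorem abs_deriv_comp_pi_sub_le (hG : Differentiable ℝ G) (hx : ∀ k, Differentiable ℝ (x k))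
    (hxB : ∀ k t, |deriv (x k) t| ≤ B)
    (hxL : ∀ k y z, |deriv (x k) y - deriv (x k) z| ≤ L * |y - z|)
    (hGJ : ∀ k t, |fderiv ℝ G (fun j => x j t) (Pi.single k 1)| ≤ J)
    (hGS : ∀ k y z, |fderiv ℝ G (fun j => x j y) (Pi.single k 1)
      - fderiv ℝ G (fun j => x j z) (Pi.single k 1)| ≤ S * |y - z|) (y z : ℝ) :
    |deriv (fun s => G fun k => x k s) y - deriv (fun s => G fun k => x k s) z|
      ≤ Fintype.card ι * ((B * S + L * J) * |y - z|) := by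
  rw [deriv_comp_pi hG hx, deriv_comp_pi hG hx, ← sum_sub_distrib, ← nsmul_eq_mul,
    ← Finset.card_univ]
  refine (abs_sum_le_sum_abs _ _).trans (sum_le_card_nsmul _ _ _ fun k _ => ?_)
  have hB : 0 ≤ B := (abs_nonneg _).trans (hxB k y)
  have hJ : 0 ≤ J := (abs_nonneg _).trans (hGJ k z)
  calc _ ≤ _ := abs_mul_sub_mul_le _ _ _ _
    _ ≤ B * (S * |y - z|) + L * |y - z| * J := by
      exact add_le_add (mul_le_mul (hxB k y) (hGS k y z) (abs_nonneg _) hB)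
        (mul_le_mul (hxL k y z) (hGJ k z) (abs_nonneg _) ((abs_nonneg _).trans (hxL k y z)))
    _ = (B * S + L * J) * |y - z| := by ring

end CompPi

-- `d` is the number of levels above: `d = i - 1` for level `i`.
def LevelDerivBounds (J S : ℝ) (d : ℕ) (f : ℝ → ℝ) : Prop :=
  Differentiable ℝ f ∧ (∀ t, |deriv f t| ≤ ((d : ℝ) * J) ^ d) ∧
    ∀ y z, |deriv f y - deriv f z| ≤ d * S * ((d : ℝ) * J) ^ d * |y - z|

theorem levelDerivBounds_id (J S : ℝ) : LevelDerivBounds J S 0 fun t => t := by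
  simp [LevelDerivBounds]

theorem LevelDerivBounds.comp_pi {p : ℕ} {J S : ℝ} (hJ : 1 ≤ J) (hS : 0 ≤ S)
    {G : (Fin (p + 1) → ℝ) → ℝ} {x : Fin (p + 1) → ℝ → ℝ} (hG : Differentiable ℝ G)
    (hx : ∀ k : Fin (p + 1), LevelDerivBounds J S k (x k))
    (hGJ : ∀ k t, |fderiv ℝ G (fun j => x j t) (Pi.single k 1)| ≤ J)
    (hGS : ∀ k y z, |fderiv ℝ G (fun j => x j y) (Pi.single k 1)
      - fderiv ℝ G (fun j => x j z) (Pi.single k 1)| ≤ S * |y - z|) :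
    LevelDerivBounds J S (p + 1) fun t => G fun k => x k t := by
  set B : ℝ := ((p : ℝ) * J) ^ p
  have hkp (k : Fin (p + 1)) : (k : ℕ) ≤ p := Nat.lt_succ_iff.1 k.2
  have hk (k : Fin (p + 1)) : (((k : ℕ) : ℝ) * J) ^ (k : ℕ) ≤ B :=
    monotone_natCast_mul_pow_self hJ (hkp k)
  have hxB (k t) : |deriv (x k) t| ≤ B := ((hx k).2.1 t).trans (hk k)
  have hxL (k y z) : |deriv (x k) y - deriv (x k) z| ≤ p * S * B * |y - z| := by
    refine ((hx k).2.2 y z).trans ?_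
    gcongr
    exacts [hkp k, hk k]
  have hB : (p + 1 : ℝ) * J * B ≤ ((p + 1 : ℝ) * J) ^ (p + 1) := by
    rw [pow_succ, mul_comm]
    simp only [B]
    gcongr
    linarith
  refine ⟨hG.comp (differentiable_pi.2 fun k => (hx k).1), fun t => ?_, fun y z => ?_⟩
  · calc _ ≤ _ := abs_deriv_comp_pi_le hG (fun k => (hx k).1) hxB hGJ t
      _ ≤ _ := by simp only [Fintype.card_fin]; push_cast; linarith
  · calc _ ≤ _ := abs_deriv_comp_pi_sub_le hG (fun k => (hx k).1) hxB hxL hGJ hGS y z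
      _ ≤ (p + 1) * S * ((p + 1) * J * B) * |y - z| := by
        have hBS : B * S ≤ B * S * J :=
          le_mul_of_one_le_right (mul_nonneg ((abs_nonneg _).trans (hxB 0 0)) hS) hJ
        have hyz : 0 ≤ (p + 1 : ℝ) * |y - z| := by positivity
        simp only [Fintype.card_fin]; push_cast; nlinarith
      _ ≤ _ := by push_cast; gcongr

theorem total_derivative_lipschitz_multilevel_general
    (n : ℕ)
    (G : (i : ℕ) → (Fin (i - 1) → ℝ) → ℝ)
    (hG : ∀ i, 2 ≤ i → i ≤ n → ContDiff ℝ 1 (G i))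
    (X : ℕ → ℝ → ℝ)
    (hX1 : ∀ t, X 1 t = t)
    (hXi : ∀ i, 2 ≤ i → i ≤ n → ∀ t,
      X i t = G i (fun k : Fin (i - 1) => X (k.val + 1) t))
    (K : ℝ)
    (hbd : ∀ i, 2 ≤ i → i ≤ n → ∀ (v : Fin (i - 1) → ℝ) (j : Fin (i - 1)),
      |fderiv ℝ (G i) v (Pi.single j 1)| ≤ K)
    (S : ℝ) (hS : 0 ≤ S)
    (hlip : ∀ i, 2 ≤ i → i ≤ n → ∀ (j : Fin (i - 1)) (y z : ℝ),
      |fderiv ℝ (G i) (fun k : Fin (i - 1) => X (k.val + 1) y) (Pi.single j 1)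
        - fderiv ℝ (G i) (fun k : Fin (i - 1) => X (k.val + 1) z) (Pi.single j 1)|
        ≤ S * |y - z|)
    (J : ℝ) (hJ : J = max K 1) :
    ∀ i, 2 ≤ i → i ≤ n → ∀ y z : ℝ,
      |deriv (X i) y - deriv (X i) z|
        ≤ ((i - 1 : ℕ) : ℝ) * S * ((((i - 1 : ℕ) : ℝ)) * J) ^ (i - 1) * |y - z| := by
  have hJ1 : 1 ≤ J := hJ ▸ le_max_right K 1
  have hKJ : K ≤ J := hJ ▸ le_max_left K 1
  suffices H : ∀ i, 1 ≤ i → i ≤ n → LevelDerivBounds J S (i - 1) (X i) from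
    fun i hi hin => (H i (by omega) hin).2.2
  intro i
  induction i using Nat.strong_induction_on with
  | _ i IH =>
  intro hi hin
  obtain rfl | ⟨p, rfl⟩ : i = 1 ∨ ∃ p, i = p + 2 := by
    rcases Nat.exists_eq_add_of_le hi with ⟨q, rfl⟩
    rcases q with _ | p
    exacts [Or.inl rfl, Or.inr ⟨p, by omega⟩]
  · rw [funext hX1]; exact levelDerivBounds_id J S
  · rw [funext (hXi (p + 2) (by omega) hin)]
    refine LevelDerivBounds.comp_pi hJ1 hS ((hG _ (by omega) hin).differentiable one_ne_zero)
      (fun k => ?_) (fun k t => (hbd _ (by omega) hin _ k).trans hKJ) (hlip _ (by omega) hin)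
    have hk := k.2
    simpa using IH (k + 1) (by omega) (by omega) (by omega)

/-- **Lemma: Lipschitz estimate for the total derivative `dx_i/dx_1` in an
`n`-level hierarchical system.** With trajectories `X 1 t = t` and
`X i t = G i (X 1 t, …, X (i-1) t)`, if every partial derivative of every `G i`
is bounded by `K`, every map `t ↦ ∂x_i/∂x_j(t)` is `S`-Lipschitz, and
`J = max K 1`, then `|X i '(y) - X i '(z)| ≤ (i-1) S ((i-1) J)^(i-1) |y - z|`. -/
theorem total_derivative_lipschitz_multilevel
    (n : ℕ) (hn : 2 ≤ n)
    (G : (i : ℕ) → (Fin (i - 1) → ℝ) → ℝ)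
    (hG : ∀ i, 2 ≤ i → i ≤ n → ContDiff ℝ 1 (G i))
    (X : ℕ → ℝ → ℝ)
    (hX1 : ∀ t, X 1 t = t)
    (hXi : ∀ i, 2 ≤ i → i ≤ n → ∀ t,
      X i t = G i (fun k : Fin (i - 1) => X (k.val + 1) t))
    (K : ℝ) (hK : 0 ≤ K)
    (hbd : ∀ i, 2 ≤ i → i ≤ n → ∀ (v : Fin (i - 1) → ℝ) (j : Fin (i - 1)),
      |fderiv ℝ (G i) v (Pi.single j 1)| ≤ K)
    (S : ℝ) (hS : 0 ≤ S)
    (hlip : ∀ i, 2 ≤ i → i ≤ n → ∀ (j : Fin (i - 1)) (y z : ℝ),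
      |fderiv ℝ (G i) (fun k : Fin (i - 1) => X (k.val + 1) y) (Pi.single j 1)
        - fderiv ℝ (G i) (fun k : Fin (i - 1) => X (k.val + 1) z) (Pi.single j 1)|
        ≤ S * |y - z|)
    (J : ℝ) (hJ : J = max K 1) :
    ∀ i, 2 ≤ i → i ≤ n → ∀ y z : ℝ,
      |deriv (X i) y - deriv (X i) z|
        ≤ ((i - 1 : ℕ) : ℝ) * S * ((((i - 1 : ℕ) : ℝ)) * J) ^ (i - 1) * |y - z| :=
  total_derivative_lipschitz_multilevel_general n G hG X hX1 hXi K hbd S hS hlip J hJ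
end

section
/- Consider an n-level hierarchical system: an integer n ≥ 2, continuously differentiable functions G_i : ℝ^{i-1} → ℝ for 2 ≤ i ≤ n, and trajectory functions X_1, ..., X_n : ℝ → ℝ defined by X_1(t) = t and X_i(t) = G_i(X_1(t), ..., X_{i-1}(t)); write ∂x_i/∂x_j(t) for the j-th partial derivative of G_i evaluated at (X_1(t), ..., X_{i-1}(t)). Let f₁ : ℝ^n → ℝ be continuously differentiable and define F(t) = f₁(X_1(t), ..., X_n(t)). Suppose there are constants K, S, N₀, M ≥ 0 such that: every partial derivative of every G_i is bounded in absolute value by K; for all 2 ≤ i ≤ n and 1 ≤ j < i the map t ↦ ∂x_i/∂x_j(t) is S-Lipschitz; every partial derivative of f₁ is bounded in absolute value by N₀; and for every 1 ≤ j ≤ n the map t ↦ (∂f₁/∂x_j)(X_1(t), ..., X_n(t)) is M-Lipschitz. Set J = max(M, N₀, K, S, 1). Then for all y, z ∈ ℝ, |F'(y) - F'(z)| ≤ n^{n+1} J^{n+1} |y - z|. -/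
/-!
By the chain rule, the derivative of the trajectory of a level below `i` others is a sum of `i`
products (derivative of a higher trajectory) × (partial derivative of the best response along the
trajectory). Bounding each product with `|ab - a'b'| ≤ |a| |b - b'| + |b'| |a - a'|` shows by
induction that this derivative is bounded by `(nJ)^i` and `i n^i J^(i+1)`-Lipschitz.
The reduced objective `F` is then treated as the trajectory of a level `n + 1`.
-/

open Finset

theorem HasFDerivAt.hasDerivAt_comp_pi {ι : Type*} [Fintype ι] [DecidableEq ι]
    {g : (ι → ℝ) → ℝ} {L : (ι → ℝ) →L[ℝ] ℝ} {Y : ℝ → ι → ℝ} {Y' : ι → ℝ} {t : ℝ}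
    (hg : HasFDerivAt g L (Y t)) (hY : ∀ k, HasDerivAt (fun s => Y s k) (Y' k) t) :
    HasDerivAt (fun s => g (Y s)) (∑ k, Y' k * L (Pi.single k 1)) t := by
  refine (hg.comp_hasDerivAt t (hasDerivAt_pi.2 hY)).congr_deriv ?_
  conv_lhs => rw [pi_eq_sum_univ' Y', map_sum]
  simp only [map_smul, smul_eq_mul]

theorem abs_sum_mul_le {ι : Type*} [Fintype ι] {a b : ι → ℝ} {A B : ℝ}
    (ha : ∀ k, |a k| ≤ A) (hb : ∀ k, |b k| ≤ B) :
    |∑ k, a k * b k| ≤ Fintype.card ι * (A * B) := by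
  calc |∑ k, a k * b k| ≤ ∑ k, |a k| * |b k| := by
        simpa only [abs_mul] using abs_sum_le_sum_abs (fun k => a k * b k) univ
    _ ≤ ∑ _k : ι, A * B := by
        gcongr with k
        · exact (abs_nonneg _).trans (ha k)
        · exact ha k
        · exact hb k
    _ = Fintype.card ι * (A * B) := by simp

theorem abs_mul_sub_mul_le_s11 {a b : ℝ → ℝ} {A B La Lb : ℝ} (y z : ℝ)
    (ha : ∀ t, |a t| ≤ A) (hb : ∀ t, |b t| ≤ B)
    (hla : |a y - a z| ≤ La * |y - z|) (hlb : |b y - b z| ≤ Lb * |y - z|) :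
    |a y * b y - a z * b z| ≤ (A * Lb + B * La) * |y - z| := by
  have hA : 0 ≤ A := (abs_nonneg _).trans (ha y)
  have hB : 0 ≤ B := (abs_nonneg _).trans (hb z)
  calc |a y * b y - a z * b z| = |a y * (b y - b z) + b z * (a y - a z)| := by ring_nf
    _ ≤ |a y| * |b y - b z| + |b z| * |a y - a z| := by
        simpa only [abs_mul] using abs_add_le (a y * (b y - b z)) (b z * (a y - a z))
    _ ≤ A * (Lb * |y - z|) + B * (La * |y - z|) := by
        gcongr
        exacts [ha y, hb z]
    _ = (A * Lb + B * La) * |y - z| := by ring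

theorem abs_sum_mul_sub_sum_mul_le {ι : Type*} [Fintype ι] {a b : ι → ℝ → ℝ}
    {A B La Lb : ℝ} (ha : ∀ k t, |a k t| ≤ A) (hb : ∀ k t, |b k t| ≤ B)
    (hla : ∀ k y z, |a k y - a k z| ≤ La * |y - z|)
    (hlb : ∀ k y z, |b k y - b k z| ≤ Lb * |y - z|) (y z : ℝ) :
    |∑ k, a k y * b k y - ∑ k, a k z * b k z|
      ≤ Fintype.card ι * (A * Lb + B * La) * |y - z| := by
  rw [← sum_sub_distrib]
  calc |∑ k, (a k y * b k y - a k z * b k z)|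
        ≤ ∑ k, |a k y * b k y - a k z * b k z| := abs_sum_le_sum_abs _ _
    _ ≤ ∑ _k : ι, (A * Lb + B * La) * |y - z| := by
        gcongr with k
        exact abs_mul_sub_mul_le_s11 y z (ha k) (hb k) (hla k y z) (hlb k y z)
    _ = Fintype.card ι * (A * Lb + B * La) * |y - z| := by simp [mul_assoc]

/-- The estimates proved for `X (i + 1)`, the trajectory of the level below `i` others. -/
def LevelEstimate (c J : ℝ) (i : ℕ) (x : ℝ → ℝ) : Prop :=
  Differentiable ℝ x ∧ (∀ t, |deriv x t| ≤ (c * J) ^ i) ∧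
    ∀ y z, |deriv x y - deriv x z| ≤ i * c ^ i * J ^ (i + 1) * |y - z|

namespace LevelEstimate

variable {c J : ℝ}

theorem id : LevelEstimate c J 0 id :=
  ⟨differentiable_id, fun _ => by simp, fun _ _ => by simp⟩

theorem mono {i j : ℕ} {x : ℝ → ℝ} (hx : LevelEstimate c J i x) (hij : i ≤ j)
    (hc : 1 ≤ c) (hJ : 1 ≤ J) : LevelEstimate c J j x := by
  obtain ⟨hdiff, hbound, hlip⟩ := hx
  refine ⟨hdiff, fun t => (hbound t).trans ?_, fun y z => (hlip y z).trans ?_⟩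
  · exact pow_le_pow_right₀ (one_le_mul_of_one_le_of_one_le hc hJ) hij
  · gcongr

theorem comp {p : ℕ} (hJ : 1 ≤ J) (hc : (p : ℝ) + 1 ≤ c)
    {g : (Fin (p + 1) → ℝ) → ℝ} (hg : Differentiable ℝ g) {Y : Fin (p + 1) → ℝ → ℝ}
    (hY : ∀ k, LevelEstimate c J p (Y k))
    (hbd : ∀ k t, |fderiv ℝ g (fun l => Y l t) (Pi.single k 1)| ≤ J)
    (hlip : ∀ k y z, |fderiv ℝ g (fun l => Y l y) (Pi.single k 1)
      - fderiv ℝ g (fun l => Y l z) (Pi.single k 1)| ≤ J * |y - z|) :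
    LevelEstimate c J (p + 1) (fun t => g (fun k => Y k t)) := by
  have hderiv : ∀ t, HasDerivAt (fun t => g (fun k => Y k t))
      (∑ k, deriv (Y k) t * fderiv ℝ g (fun l => Y l t) (Pi.single k 1)) t := fun t =>
    (hg _).hasFDerivAt.hasDerivAt_comp_pi fun k => ((hY k).1 t).hasDerivAt
  have hc0 : 0 ≤ c := by linarith [(p.cast_nonneg : (0 : ℝ) ≤ p)]
  refine ⟨fun t => (hderiv t).differentiableAt, fun t => ?_, fun y z => ?_⟩
  · rw [(hderiv t).deriv]
    refine (abs_sum_mul_le (fun k => (hY k).2.1 t) (fun k => hbd k t)).trans ?_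
    rw [Fintype.card_fin, pow_succ, Nat.cast_add_one]
    calc ((p : ℝ) + 1) * ((c * J) ^ p * J) ≤ c * ((c * J) ^ p * J) := by gcongr
      _ = (c * J) ^ p * (c * J) := by ring
  · rw [(hderiv y).deriv, (hderiv z).deriv]
    refine (abs_sum_mul_sub_sum_mul_le (fun k => (hY k).2.1) (fun k t => hbd k t)
      (fun k => (hY k).2.2) hlip y z).trans ?_
    rw [Fintype.card_fin, Nat.cast_add_one]
    -- `1 + p J ≤ (p + 1) J ≤ c J`
    have key : 1 + p * J ≤ c * J := by nlinarith
    calc ((p : ℝ) + 1) * ((c * J) ^ p * J + J * (p * c ^ p * J ^ (p + 1))) * |y - z|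
        = (p + 1) * c ^ p * J ^ (p + 1) * (1 + p * J) * |y - z| := by ring
      _ ≤ (p + 1) * c ^ p * J ^ (p + 1) * (c * J) * |y - z| := by gcongr
      _ = (p + 1) * c ^ (p + 1) * J ^ (p + 1 + 1) * |y - z| := by ring

end LevelEstimate

theorem levelEstimate_trajectory (n : ℕ) (G : (i : ℕ) → (Fin (i - 1) → ℝ) → ℝ)
    (hG : ∀ i, 2 ≤ i → i ≤ n → Differentiable ℝ (G i)) (X : ℕ → ℝ → ℝ)
    (hX1 : ∀ t, X 1 t = t)
    (hXi : ∀ i, 2 ≤ i → i ≤ n → ∀ t, X i t = G i (fun k : Fin (i - 1) => X (k.val + 1) t))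
    {J : ℝ} (hJ : 1 ≤ J)
    (hbd : ∀ i, 2 ≤ i → i ≤ n → ∀ (v : Fin (i - 1) → ℝ) (j : Fin (i - 1)),
      |fderiv ℝ (G i) v (Pi.single j 1)| ≤ J)
    (hlip : ∀ i, 2 ≤ i → i ≤ n → ∀ (j : Fin (i - 1)) (y z : ℝ),
      |fderiv ℝ (G i) (fun k : Fin (i - 1) => X (k.val + 1) y) (Pi.single j 1)
        - fderiv ℝ (G i) (fun k : Fin (i - 1) => X (k.val + 1) z) (Pi.single j 1)|
        ≤ J * |y - z|) :
    ∀ p < n, LevelEstimate n J p (X (p + 1)) := by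
  intro p
  induction p using Nat.strong_induction_on with
  | _ p ih =>
    intro hp
    have hn : (1 : ℝ) ≤ n := by exact_mod_cast p.zero_lt_of_lt hp
    match p, ih, hp with
    | 0, _, _ =>
      rw [show X 1 = id from funext hX1]
      exact LevelEstimate.id
    | p + 1, ih, hp =>
      rw [show X (p + 2) = _ from funext (hXi (p + 2) (by omega) hp)]
      exact LevelEstimate.comp hJ (by exact_mod_cast hp.le) (hG _ (by omega) hp)
        (fun k => (ih k k.2 (by omega)).mono (by omega) hn hJ)
        (fun k t => hbd _ (by omega) hp _ k) (hlip _ (by omega) hp)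

theorem reduced_objective_derivative_lipschitz_general
    (n : ℕ) (hn : 2 ≤ n)
    (G : (i : ℕ) → (Fin (i - 1) → ℝ) → ℝ)
    (hG : ∀ i, 2 ≤ i → i ≤ n → ContDiff ℝ 1 (G i))
    (X : ℕ → ℝ → ℝ)
    (hX1 : ∀ t, X 1 t = t)
    (hXi : ∀ i, 2 ≤ i → i ≤ n → ∀ t,
      X i t = G i (fun k : Fin (i - 1) => X (k.val + 1) t))
    (f₁ : (Fin n → ℝ) → ℝ) (hf₁ : ContDiff ℝ 1 f₁)
    (F : ℝ → ℝ) (hF : ∀ t, F t = f₁ (fun j : Fin n => X (j.val + 1) t))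
    (K : ℝ)
    (hbd : ∀ i, 2 ≤ i → i ≤ n → ∀ (v : Fin (i - 1) → ℝ) (j : Fin (i - 1)),
      |fderiv ℝ (G i) v (Pi.single j 1)| ≤ K)
    (S : ℝ)
    (hlipG : ∀ i, 2 ≤ i → i ≤ n → ∀ (j : Fin (i - 1)) (y z : ℝ),
      |fderiv ℝ (G i) (fun k : Fin (i - 1) => X (k.val + 1) y) (Pi.single j 1)
        - fderiv ℝ (G i) (fun k : Fin (i - 1) => X (k.val + 1) z) (Pi.single j 1)|
        ≤ S * |y - z|)
    (N₀ : ℝ)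
    (hbdf : ∀ (v : Fin n → ℝ) (j : Fin n), |fderiv ℝ f₁ v (Pi.single j 1)| ≤ N₀)
    (M : ℝ)
    (hlipf : ∀ (j : Fin n) (y z : ℝ),
      |fderiv ℝ f₁ (fun k : Fin n => X (k.val + 1) y) (Pi.single j 1)
        - fderiv ℝ f₁ (fun k : Fin n => X (k.val + 1) z) (Pi.single j 1)|
        ≤ M * |y - z|)
    (J : ℝ) (hJ : J = max M (max N₀ (max K (max S 1)))) :
    ∀ y z : ℝ,
      |deriv F y - deriv F z| ≤ (n : ℝ) ^ (n + 1) * J ^ (n + 1) * |y - z| := by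
  obtain ⟨hMJ, hNJ, hKJ, hSJ, hJ1⟩ : M ≤ J ∧ N₀ ≤ J ∧ K ≤ J ∧ S ≤ J ∧ 1 ≤ J := by
    simp [hJ]
  obtain ⟨q, rfl⟩ : ∃ q, n = q + 1 := ⟨n - 1, by omega⟩
  have hX := levelEstimate_trajectory (q + 1) G
    (fun i hi hin => (hG i hi hin).differentiable one_ne_zero) X hX1 hXi hJ1
    (fun i hi hin v j => (hbd i hi hin v j).trans hKJ)
    (fun i hi hin j y z => (hlipG i hi hin j y z).trans (by gcongr))
  have hFest : LevelEstimate (q + 1 : ℕ) J (q + 1) F := by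
    rw [show F = _ from funext hF]
    exact LevelEstimate.comp hJ1 (by push_cast; rfl) (hf₁.differentiable one_ne_zero)
      (fun j => (hX j j.2).mono (by omega) (by simp) hJ1)
      (fun j t => (hbdf _ j).trans hNJ) (fun j y z => (hlipf j y z).trans (by gcongr))
  intro y z
  calc |deriv F y - deriv F z| ≤ _ := hFest.2.2 y z
    _ = _ := by ring

/-- **Lemma: Lipschitz estimate for the derivative of the reduced upper-level
objective `F(t) = f₁(X 1 t, …, X n t)` of an `n`-level hierarchical system.**
Under boundedness of the partial derivatives of the best responses `G i` (by `K`)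
and of `f₁` (by `N₀`), and `S`- resp. `M`-Lipschitz continuity of the partial
derivatives along the trajectories, with `J = max(M, N₀, K, S, 1)`,
`|F'(y) - F'(z)| ≤ n^(n+1) J^(n+1) |y - z|`. -/
theorem reduced_objective_derivative_lipschitz
    (n : ℕ) (hn : 2 ≤ n)
    (G : (i : ℕ) → (Fin (i - 1) → ℝ) → ℝ)
    (hG : ∀ i, 2 ≤ i → i ≤ n → ContDiff ℝ 1 (G i))
    (X : ℕ → ℝ → ℝ)
    (hX1 : ∀ t, X 1 t = t)
    (hXi : ∀ i, 2 ≤ i → i ≤ n → ∀ t,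
      X i t = G i (fun k : Fin (i - 1) => X (k.val + 1) t))
    (f₁ : (Fin n → ℝ) → ℝ) (hf₁ : ContDiff ℝ 1 f₁)
    (F : ℝ → ℝ) (hF : ∀ t, F t = f₁ (fun j : Fin n => X (j.val + 1) t))
    (K : ℝ) (hK : 0 ≤ K)
    (hbd : ∀ i, 2 ≤ i → i ≤ n → ∀ (v : Fin (i - 1) → ℝ) (j : Fin (i - 1)),
      |fderiv ℝ (G i) v (Pi.single j 1)| ≤ K)
    (S : ℝ) (hS : 0 ≤ S)
    (hlipG : ∀ i, 2 ≤ i → i ≤ n → ∀ (j : Fin (i - 1)) (y z : ℝ),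
      |fderiv ℝ (G i) (fun k : Fin (i - 1) => X (k.val + 1) y) (Pi.single j 1)
        - fderiv ℝ (G i) (fun k : Fin (i - 1) => X (k.val + 1) z) (Pi.single j 1)|
        ≤ S * |y - z|)
    (N₀ : ℝ) (hN₀ : 0 ≤ N₀)
    (hbdf : ∀ (v : Fin n → ℝ) (j : Fin n), |fderiv ℝ f₁ v (Pi.single j 1)| ≤ N₀)
    (M : ℝ) (hM : 0 ≤ M)
    (hlipf : ∀ (j : Fin n) (y z : ℝ),
      |fderiv ℝ f₁ (fun k : Fin n => X (k.val + 1) y) (Pi.single j 1)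
        - fderiv ℝ f₁ (fun k : Fin n => X (k.val + 1) z) (Pi.single j 1)|
        ≤ M * |y - z|)
    (J : ℝ) (hJ : J = max M (max N₀ (max K (max S 1)))) :
    ∀ y z : ℝ,
      |deriv F y - deriv F z| ≤ (n : ℝ) ^ (n + 1) * J ^ (n + 1) * |y - z| :=
  reduced_objective_derivative_lipschitz_general n hn G hG X hX1 hXi f₁ hf₁ F hF K hbd S hlipG N₀
    hbdf M hlipf J hJ
end

section
/- Consider an n-level hierarchical system: an integer n ≥ 2, continuously differentiable functions G_i : ℝ^{i-1} → ℝ for 2 ≤ i ≤ n, and trajectory functions X_1, ..., X_n : ℝ → ℝ defined by X_1(t) = t and X_i(t) = G_i(X_1(t), ..., X_{i-1}(t)); write ∂x_i/∂x_j(t) for the j-th partial derivative of G_i evaluated at (X_1(t), ..., X_{i-1}(t)). Let f₁ : ℝ^n → ℝ be continuously differentiable with f₁ ≥ 0 everywhere, and define F(t) = f₁(X_1(t), ..., X_n(t)). Suppose there are constants K, S, N₀, M ≥ 0 such that: every partial derivative of every G_i is bounded in absolute value by K; for all 2 ≤ i ≤ n and 1 ≤ j < i the map t ↦ ∂x_i/∂x_j(t)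 is S-Lipschitz; every partial derivative of f₁ is bounded in absolute value by N₀; and for every 1 ≤ j ≤ n the map t ↦ (∂f₁/∂x_j)(X_1(t), ..., X_n(t)) is M-Lipschitz. Set J = max(M, N₀, K, S, 1) and L = n^{n+1} J^{n+1}. Fix a step size β with 0 < β < 2/L, an initial point t₀ ∈ ℝ, and define the gradient-descent iterates t_{k+1} = t_k - β F'(t_k). Then for every integer N ≥ 1, (1/N) ∑_{i=0}^{N-1} (F'(t_i))² ≤ F(t₀) / (N (β - β² L / 2)); in particular the average squared derivative is O(n^{n+1} J^{n+1} / N). -/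
/-!
By the chain rule, `X (k + 1)' = ∑ⱼ ∂ⱼ G_{k+1} · X (j + 1)'` and `F' = ∑ⱼ ∂ⱼ f₁ · X (j + 1)'`.
Since every partial derivative is bounded by `J ≥ 1` and `J`-Lipschitz along the trajectory,
an induction on the level shows that `X (k + 1)'` is bounded by `(2J)^k` and
`k (2J)^k`-Lipschitz, hence `F'` is `n (2J)^n`-Lipschitz, and `n (2J)^n ≤ L` once `n ≥ 2`.
The descent lemma for `L`-smooth functions then gives
`F(t_{k+1}) ≤ F(t_k) - (β - β²L/2) F'(t_k)²`; telescoping and `F ≥ 0` give the bound.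
-/

open Finset

structure HasBoundedLipschitzDeriv (f : ℝ → ℝ) (a b : ℝ) : Prop where
  differentiable : Differentiable ℝ f
  abs_deriv_le : ∀ s, |deriv f s| ≤ a
  abs_deriv_sub_le : ∀ y z, |deriv f y - deriv f z| ≤ b * |y - z|

theorem HasBoundedLipschitzDeriv.mono {f : ℝ → ℝ} {a b a' b' : ℝ}
    (hf : HasBoundedLipschitzDeriv f a b) (ha : a ≤ a') (hb : b ≤ b') :
    HasBoundedLipschitzDeriv f a' b' where
  differentiable := hf.differentiable
  abs_deriv_le s := (hf.abs_deriv_le s).trans ha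
  abs_deriv_sub_le y z :=
    (hf.abs_deriv_sub_le y z).trans (mul_le_mul_of_nonneg_right hb (abs_nonneg _))

section Partials

variable {ι : Type*} [Fintype ι]

theorem abs_sum_mul_sub_sum_mul_le_s12 {P d : ι → ℝ → ℝ} {A B : ℝ} {a b : ι → ℝ} {y z : ℝ}
    (hPA : ∀ k, |P k z| ≤ A) (hPB : ∀ k, |P k y - P k z| ≤ B * |y - z|)
    (hda : ∀ k, |d k y| ≤ a k) (hdb : ∀ k, |d k y - d k z| ≤ b k * |y - z|) :
    |∑ k, P k y * d k y - ∑ k, P k z * d k z| ≤ (∑ k, (B * a k + A * b k)) * |y - z| := by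
  rw [← sum_sub_distrib, sum_mul]
  refine (abs_sum_le_sum_abs _ _).trans (sum_le_sum fun k _ => ?_)
  have hA : 0 ≤ A := (abs_nonneg _).trans (hPA k)
  calc |P k y * d k y - P k z * d k z|
      = |(P k y - P k z) * d k y + P k z * (d k y - d k z)| := by ring_nf
    _ ≤ |P k y - P k z| * |d k y| + |P k z| * |d k y - d k z| := by
      rw [← abs_mul, ← abs_mul]; exact abs_add_le _ _
    _ ≤ B * |y - z| * a k + A * (b k * |y - z|) := by
      gcongr
      · exact (abs_nonneg _).trans (hPB k)
      · exact hPB k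
      · exact hda k
      · exact hPA k
      · exact hdb k
    _ = (B * a k + A * b k) * |y - z| := by ring

variable [DecidableEq ι]

theorem fderiv_apply_eq_sum_partial (g : (ι → ℝ) → ℝ) (w d : ι → ℝ) :
    fderiv ℝ g w d = ∑ k, fderiv ℝ g w (Pi.single k 1) * d k := by
  conv_lhs => rw [← univ_sum_single d]
  simp only [map_sum]
  refine sum_congr rfl fun k _ => ?_
  rw [mul_comm, ← smul_eq_mul, ← map_smul, ← Pi.single_smul', smul_eq_mul, mul_one]

theorem hasDerivAt_comp_pi {g : (ι → ℝ) → ℝ} {v : ℝ → ι → ℝ} {t : ℝ}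
    (hg : DifferentiableAt ℝ g (v t)) (hv : ∀ k, DifferentiableAt ℝ (fun s => v s k) t) :
    HasDerivAt (fun s => g (v s))
      (∑ k, fderiv ℝ g (v t) (Pi.single k 1) * deriv (fun s => v s k) t) t := by
  rw [← fderiv_apply_eq_sum_partial]
  exact hg.hasFDerivAt.comp_hasDerivAt t (hasDerivAt_pi.2 fun k => (hv k).hasDerivAt)

theorem HasBoundedLipschitzDeriv.comp_pi {g : (ι → ℝ) → ℝ} (hg : Differentiable ℝ g)
    {v : ℝ → ι → ℝ} {A B : ℝ} {a b : ι → ℝ}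
    (hv : ∀ k, HasBoundedLipschitzDeriv (fun s => v s k) (a k) (b k))
    (hA : ∀ t k, |fderiv ℝ g (v t) (Pi.single k 1)| ≤ A)
    (hB : ∀ k y z, |fderiv ℝ g (v y) (Pi.single k 1) - fderiv ℝ g (v z) (Pi.single k 1)|
      ≤ B * |y - z|) :
    HasBoundedLipschitzDeriv (fun s => g (v s)) (A * ∑ k, a k) (∑ k, (B * a k + A * b k)) := by
  have hderiv : ∀ t, HasDerivAt (fun s => g (v s))
      (∑ k, fderiv ℝ g (v t) (Pi.single k 1) * deriv (fun s => v s k) t) t :=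
    fun t => hasDerivAt_comp_pi (hg _) fun k => (hv k).differentiable t
  refine ⟨fun t => (hderiv t).differentiableAt, fun t => ?_, fun y z => ?_⟩
  · rw [(hderiv t).deriv, mul_sum]
    refine (abs_sum_le_sum_abs _ _).trans (sum_le_sum fun k _ => ?_)
    rw [abs_mul]
    exact mul_le_mul (hA t k) ((hv k).abs_deriv_le t) (abs_nonneg _)
      ((abs_nonneg _).trans (hA t k))
  · rw [(hderiv y).deriv, (hderiv z).deriv]
    exact abs_sum_mul_sub_sum_mul_le_s12 (P := fun k s => fderiv ℝ g (v s) (Pi.single k 1))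
      (d := fun k s => deriv (fun s => v s k) s) (hA z) (hB · y z)
      (fun k => (hv k).abs_deriv_le y) fun k => (hv k).abs_deriv_sub_le y z

end Partials

theorem mul_geom_sum_two_mul_le {J : ℝ} (hJ : 1 ≤ J) (m : ℕ) :
    J * ∑ k ∈ range m, (2 * J) ^ k ≤ (2 * J) ^ m := by
  induction m with
  | zero => simp
  | succ m ih =>
    rw [sum_range_succ, mul_add, pow_succ]
    nlinarith [pow_nonneg (by linarith : (0 : ℝ) ≤ 2 * J) m]

theorem mul_sum_succ_mul_geom_two_mul_le {J : ℝ} (hJ : 1 ≤ J) (m : ℕ) :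
    J * ∑ k ∈ range m, ((k : ℝ) + 1) * (2 * J) ^ k ≤ m * (2 * J) ^ m := by
  induction m with
  | zero => simp
  | succ m ih =>
    rw [sum_range_succ, mul_add, pow_succ]
    push_cast
    have h : 0 ≤ ((m : ℝ) + 1) * (2 * J) ^ m := by positivity
    nlinarith [mul_nonneg h (sub_nonneg.2 hJ)]

theorem HasBoundedLipschitzDeriv.comp_pi_geom {m : ℕ} {g : (Fin m → ℝ) → ℝ}
    (hg : Differentiable ℝ g) {v : ℝ → Fin m → ℝ} {J : ℝ} (hJ : 1 ≤ J)
    (hv : ∀ k : Fin m, HasBoundedLipschitzDeriv (fun s => v s k) ((2 * J) ^ (k : ℕ))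
      ((k : ℕ) * (2 * J) ^ (k : ℕ)))
    (hA : ∀ t k, |fderiv ℝ g (v t) (Pi.single k 1)| ≤ J)
    (hB : ∀ k y z, |fderiv ℝ g (v y) (Pi.single k 1) - fderiv ℝ g (v z) (Pi.single k 1)|
      ≤ J * |y - z|) :
    HasBoundedLipschitzDeriv (fun s => g (v s)) ((2 * J) ^ m) (m * (2 * J) ^ m) := by
  refine (HasBoundedLipschitzDeriv.comp_pi hg hv hA hB).mono ?_ ?_
  · rw [Fin.sum_univ_eq_sum_range (fun k => (2 * J) ^ k)]
    exact mul_geom_sum_two_mul_le hJ m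
  · rw [Fin.sum_univ_eq_sum_range (fun k => J * (2 * J) ^ k + J * (k * (2 * J) ^ k))]
    refine le_of_eq_of_le ?_ (mul_sum_succ_mul_geom_two_mul_le hJ m)
    rw [mul_sum]
    exact sum_congr rfl fun k _ => by ring

theorem hasBoundedLipschitzDeriv_id : HasBoundedLipschitzDeriv id 1 0 where
  differentiable := differentiable_id
  abs_deriv_le s := by simp
  abs_deriv_sub_le y z := by simp

theorem hasBoundedLipschitzDeriv_levels {n : ℕ} {G : (i : ℕ) → (Fin (i - 1) → ℝ) → ℝ}
    (hG : ∀ i, 2 ≤ i → i ≤ n → Differentiable ℝ (G i)) {X : ℕ → ℝ → ℝ}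
    (hX1 : ∀ t, X 1 t = t)
    (hXi : ∀ i, 2 ≤ i → i ≤ n → ∀ t, X i t = G i (fun k : Fin (i - 1) => X (k.val + 1) t))
    {J : ℝ} (hJ : 1 ≤ J)
    (hbd : ∀ i, 2 ≤ i → i ≤ n → ∀ (v : Fin (i - 1) → ℝ) (j : Fin (i - 1)),
      |fderiv ℝ (G i) v (Pi.single j 1)| ≤ J)
    (hlipG : ∀ i, 2 ≤ i → i ≤ n → ∀ (j : Fin (i - 1)) (y z : ℝ),
      |fderiv ℝ (G i) (fun k : Fin (i - 1) => X (k.val + 1) y) (Pi.single j 1)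
        - fderiv ℝ (G i) (fun k : Fin (i - 1) => X (k.val + 1) z) (Pi.single j 1)|
        ≤ J * |y - z|) :
    ∀ m < n, HasBoundedLipschitzDeriv (X (m + 1)) ((2 * J) ^ m) (m * (2 * J) ^ m) := by
  intro m
  induction m using Nat.strong_induction_on with
  | _ m ih =>
    intro hm
    rcases m with _ | m
    · rw [show X 1 = id from funext hX1, Nat.cast_zero, zero_mul, pow_zero]
      exact hasBoundedLipschitzDeriv_id
    · rw [funext (hXi (m + 2) (by omega) (by omega))]
      exact HasBoundedLipschitzDeriv.comp_pi_geom (hG _ (by omega) (by omega)) hJ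
        (fun k => ih k (by omega) (by omega)) (fun t => hbd _ (by omega) (by omega) _)
        (hlipG _ (by omega) (by omega))

theorem le_add_deriv_mul_add_of_abs_deriv_sub_le {F : ℝ → ℝ} (hF : Differentiable ℝ F) {L : ℝ}
    (hlip : ∀ y z, |deriv F y - deriv F z| ≤ L * |y - z|) (x y : ℝ) :
    F y ≤ F x + deriv F x * (y - x) + L / 2 * (y - x) ^ 2 := by
  set v := y - x with hv
  let h : ℝ → ℝ := fun s => F (x + s * v) - s * (deriv F x * v) - L / 2 * v ^ 2 * s ^ 2
  have hderiv : ∀ s, HasDerivAt h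
      (deriv F (x + s * v) * v - deriv F x * v - L / 2 * v ^ 2 * (2 * s)) s := by
    intro s
    have hline : HasDerivAt (fun s => x + s * v) v s := by
      simpa using ((hasDerivAt_id s).mul_const v).const_add x
    have hlin : HasDerivAt (fun s => s * (deriv F x * v)) (deriv F x * v) s := by
      simpa using (hasDerivAt_id s).mul_const (deriv F x * v)
    have hquad : HasDerivAt (fun s => L / 2 * v ^ 2 * s ^ 2) (L / 2 * v ^ 2 * (2 * s)) s := by
      simpa using (hasDerivAt_pow 2 s).const_mul (L / 2 * v ^ 2)
    exact (((hF _).hasDerivAt.comp s hline).sub hlin).sub hquad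
  have hanti : AntitoneOn h (Set.Ici 0) := by
    refine antitoneOn_of_deriv_nonpos (convex_Ici 0)
      (fun s _ => (hderiv s).continuousAt.continuousWithinAt)
      (fun s _ => (hderiv s).differentiableAt.differentiableWithinAt) fun s hs => ?_
    rw [interior_Ici, Set.mem_Ioi] at hs
    have hlip_s : |deriv F (x + s * v) - deriv F x| ≤ L * (s * |v|) := by
      simpa [abs_mul, abs_of_pos hs] using hlip (x + s * v) x
    calc deriv h s = (deriv F (x + s * v) - deriv F x) * v - L * s * v ^ 2 := by
          rw [(hderiv s).deriv]; ring
      _ ≤ |deriv F (x + s * v) - deriv F x| * |v| - L * s * v ^ 2 := by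
          gcongr ?_ - _
          exact (le_abs_self _).trans_eq (abs_mul _ _)
      _ ≤ L * (s * |v|) * |v| - L * s * v ^ 2 := by gcongr
      _ = 0 := by rw [← sq_abs v]; ring
  have hend : h 1 ≤ h 0 := hanti (Set.mem_Ici.2 le_rfl) (Set.mem_Ici.2 zero_le_one) zero_le_one
  simp only [h, hv] at hend
  ring_nf at hend ⊢
  linarith

theorem gradientDescent_mean_sq_deriv_le {F : ℝ → ℝ} (hF : Differentiable ℝ F) (hF0 : ∀ s, 0 ≤ F s)
    {L : ℝ} (hlip : ∀ y z, |deriv F y - deriv F z| ≤ L * |y - z|)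
    {β : ℝ} (hβ : 0 < β) (hβ' : β < 2 / L)
    {t : ℕ → ℝ} (ht : ∀ k, t (k + 1) = t k - β * deriv F (t k)) (N : ℕ) :
    (1 / (N : ℝ)) * ∑ i ∈ range N, (deriv F (t i)) ^ 2
      ≤ F (t 0) / ((N : ℝ) * (β - β ^ 2 * L / 2)) := by
  have hL : 0 < L := by
    by_contra! hL
    exact (lt_asymm hβ (hβ'.trans_le (div_nonpos_of_nonneg_of_nonpos zero_le_two hL))).elim
  have hc : 0 < β - β ^ 2 * L / 2 := by
    have := (lt_div_iff₀ hL).mp hβ'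
    nlinarith
  have hstep : ∀ k, F (t (k + 1)) ≤ F (t k) - (β - β ^ 2 * L / 2) * deriv F (t k) ^ 2 := by
    intro k
    have := le_add_deriv_mul_add_of_abs_deriv_sub_le hF hlip (t k) (t (k + 1))
    rw [ht k] at this ⊢
    linarith
  have hsum : (β - β ^ 2 * L / 2) * ∑ i ∈ range N, deriv F (t i) ^ 2 ≤ F (t 0) := by
    rw [mul_sum]
    calc ∑ i ∈ range N, (β - β ^ 2 * L / 2) * deriv F (t i) ^ 2
        ≤ ∑ i ∈ range N, (F (t i) - F (t (i + 1))) := sum_le_sum fun k _ => by linarith [hstep k]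
      _ = F (t 0) - F (t N) := sum_range_sub' _ _
      _ ≤ F (t 0) := sub_le_self _ (hF0 _)
  rw [mul_comm, div_mul_eq_div_div_swap, one_div, ← div_eq_mul_inv]
  gcongr
  exact (le_div_iff₀' hc).2 hsum

theorem natCast_mul_two_mul_pow_le {n : ℕ} (hn : 2 ≤ n) {J : ℝ} (hJ : 1 ≤ J) :
    n * (2 * J) ^ n ≤ (n : ℝ) ^ (n + 1) * J ^ (n + 1) := by
  have h2n : (2 : ℝ) ^ n ≤ (n : ℝ) ^ n := pow_le_pow_left₀ zero_le_two (by exact_mod_cast hn) n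
  have hJn : J ^ n ≤ J ^ (n + 1) := pow_le_pow_right₀ hJ n.le_succ
  calc (n : ℝ) * (2 * J) ^ n = n * (2 ^ n * J ^ n) := by rw [mul_pow]
    _ ≤ n * ((n : ℝ) ^ n * J ^ (n + 1)) := by gcongr
    _ = (n : ℝ) ^ (n + 1) * J ^ (n + 1) := by ring

theorem multilevel_gradient_descent_convergence_general
    (n : ℕ) (hn : 2 ≤ n)
    (G : (i : ℕ) → (Fin (i - 1) → ℝ) → ℝ)
    (hG : ∀ i, 2 ≤ i → i ≤ n → ContDiff ℝ 1 (G i))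
    (X : ℕ → ℝ → ℝ)
    (hX1 : ∀ t, X 1 t = t)
    (hXi : ∀ i, 2 ≤ i → i ≤ n → ∀ t,
      X i t = G i (fun k : Fin (i - 1) => X (k.val + 1) t))
    (f₁ : (Fin n → ℝ) → ℝ) (hf₁ : ContDiff ℝ 1 f₁) (hf₁0 : ∀ v, 0 ≤ f₁ v)
    (F : ℝ → ℝ) (hF : ∀ t, F t = f₁ (fun j : Fin n => X (j.val + 1) t))
    (K : ℝ)
    (hbd : ∀ i, 2 ≤ i → i ≤ n → ∀ (v : Fin (i - 1) → ℝ) (j : Fin (i - 1)),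
      |fderiv ℝ (G i) v (Pi.single j 1)| ≤ K)
    (S : ℝ)
    (hlipG : ∀ i, 2 ≤ i → i ≤ n → ∀ (j : Fin (i - 1)) (y z : ℝ),
      |fderiv ℝ (G i) (fun k : Fin (i - 1) => X (k.val + 1) y) (Pi.single j 1)
        - fderiv ℝ (G i) (fun k : Fin (i - 1) => X (k.val + 1) z) (Pi.single j 1)|
        ≤ S * |y - z|)
    (N₀ : ℝ)
    (hbdf : ∀ (v : Fin n → ℝ) (j : Fin n), |fderiv ℝ f₁ v (Pi.single j 1)| ≤ N₀)
    (M : ℝ)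
    (hlipf : ∀ (j : Fin n) (y z : ℝ),
      |fderiv ℝ f₁ (fun k : Fin n => X (k.val + 1) y) (Pi.single j 1)
        - fderiv ℝ f₁ (fun k : Fin n => X (k.val + 1) z) (Pi.single j 1)|
        ≤ M * |y - z|)
    (J : ℝ) (hJ : J = max M (max N₀ (max K (max S 1))))
    (L : ℝ) (hL : L = (n : ℝ) ^ (n + 1) * J ^ (n + 1))
    (β : ℝ) (hβ : 0 < β) (hβ' : β < 2 / L)
    (t : ℕ → ℝ) (ht : ∀ k, t (k + 1) = t k - β * deriv F (t k)) :
    ∀ N : ℕ, 1 ≤ N →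
      (1 / (N : ℝ)) * ∑ i ∈ Finset.range N, (deriv F (t i)) ^ 2
        ≤ F (t 0) / ((N : ℝ) * (β - β ^ 2 * L / 2)) := by
  intro N _
  have hJ1 : 1 ≤ J := by simp [hJ]
  have hlip_mono : ∀ {c c' : ℝ}, c ≤ c' → ∀ y z : ℝ, c * |y - z| ≤ c' * |y - z| :=
    fun hc y z => mul_le_mul_of_nonneg_right hc (abs_nonneg _)
  have hlevels := hasBoundedLipschitzDeriv_levels
    (fun i hi hin => (hG i hi hin).differentiable one_ne_zero) hX1 hXi hJ1
    (fun i hi hin v j => (hbd i hi hin v j).trans (by simp [hJ]))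
    (fun i hi hin j y z => (hlipG i hi hin j y z).trans (hlip_mono (by simp [hJ]) y z))
  have hFderiv : HasBoundedLipschitzDeriv F ((2 * J) ^ n) (n * (2 * J) ^ n) := by
    rw [funext hF]
    exact HasBoundedLipschitzDeriv.comp_pi_geom (hf₁.differentiable one_ne_zero) hJ1
      (fun j => hlevels j j.isLt) (fun _ j => (hbdf _ j).trans (by simp [hJ]))
      (fun j y z => (hlipf j y z).trans (hlip_mono (by simp [hJ]) y z))
  refine gradientDescent_mean_sq_deriv_le hFderiv.differentiable (fun s => hF s ▸ hf₁0 _)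
    (fun y z => (hFderiv.abs_deriv_sub_le y z).trans
      (hlip_mono (hL ▸ natCast_mul_two_mul_pow_le hn hJ1) y z)) hβ hβ' ht N

/-- **Theorem 3 (general convergence for `n`-level optimization).** For the
reduced nonnegative upper-level objective `F(t) = f₁(X 1 t, …, X n t)` of an
`n`-level hierarchical system satisfying the boundedness and Lipschitz
assumptions, with `J = max(M, N₀, K, S, 1)`, `L = n^(n+1) J^(n+1)`, step size
`0 < β < 2/L`, and gradient-descent iterates `t_{k+1} = t_k - β F'(t_k)`, the
average squared derivative over the first `N` steps is at most
`F(t₀) / (N (β - β²L/2)) = O(n^(n+1) J^(n+1) / N)`. -/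
theorem multilevel_gradient_descent_convergence
    (n : ℕ) (hn : 2 ≤ n)
    (G : (i : ℕ) → (Fin (i - 1) → ℝ) → ℝ)
    (hG : ∀ i, 2 ≤ i → i ≤ n → ContDiff ℝ 1 (G i))
    (X : ℕ → ℝ → ℝ)
    (hX1 : ∀ t, X 1 t = t)
    (hXi : ∀ i, 2 ≤ i → i ≤ n → ∀ t,
      X i t = G i (fun k : Fin (i - 1) => X (k.val + 1) t))
    (f₁ : (Fin n → ℝ) → ℝ) (hf₁ : ContDiff ℝ 1 f₁) (hf₁0 : ∀ v, 0 ≤ f₁ v)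
    (F : ℝ → ℝ) (hF : ∀ t, F t = f₁ (fun j : Fin n => X (j.val + 1) t))
    (K : ℝ) (hK : 0 ≤ K)
    (hbd : ∀ i, 2 ≤ i → i ≤ n → ∀ (v : Fin (i - 1) → ℝ) (j : Fin (i - 1)),
      |fderiv ℝ (G i) v (Pi.single j 1)| ≤ K)
    (S : ℝ) (hS : 0 ≤ S)
    (hlipG : ∀ i, 2 ≤ i → i ≤ n → ∀ (j : Fin (i - 1)) (y z : ℝ),
      |fderiv ℝ (G i) (fun k : Fin (i - 1) => X (k.val + 1) y) (Pi.single j 1)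
        - fderiv ℝ (G i) (fun k : Fin (i - 1) => X (k.val + 1) z) (Pi.single j 1)|
        ≤ S * |y - z|)
    (N₀ : ℝ) (hN₀ : 0 ≤ N₀)
    (hbdf : ∀ (v : Fin n → ℝ) (j : Fin n), |fderiv ℝ f₁ v (Pi.single j 1)| ≤ N₀)
    (M : ℝ) (hM : 0 ≤ M)
    (hlipf : ∀ (j : Fin n) (y z : ℝ),
      |fderiv ℝ f₁ (fun k : Fin n => X (k.val + 1) y) (Pi.single j 1)
        - fderiv ℝ f₁ (fun k : Fin n => X (k.val + 1) z) (Pi.single j 1)|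
        ≤ M * |y - z|)
    (J : ℝ) (hJ : J = max M (max N₀ (max K (max S 1))))
    (L : ℝ) (hL : L = (n : ℝ) ^ (n + 1) * J ^ (n + 1))
    (β : ℝ) (hβ : 0 < β) (hβ' : β < 2 / L)
    (t : ℕ → ℝ) (ht : ∀ k, t (k + 1) = t k - β * deriv F (t k)) :
    ∀ N : ℕ, 1 ≤ N →
      (1 / (N : ℝ)) * ∑ i ∈ Finset.range N, (deriv F (t i)) ^ 2
        ≤ F (t 0) / ((N : ℝ) * (β - β ^ 2 * L / 2)) :=
  multilevel_gradient_descent_convergence_general n hn G hG X hX1 hXi f₁ hf₁ hf₁0 F hF K hbd S hlipG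
    N₀ hbdf M hlipf J hJ L hL β hβ hβ' t ht
end

section
/- Consider an n-level hierarchical system: an integer n ≥ 2, continuously differentiable functions G_i : ℝ^{i-1} → ℝ for 2 ≤ i ≤ n, and trajectory functions X_1, ..., X_n : ℝ → ℝ defined by X_1(t) = t and X_i(t) = G_i(X_1(t), ..., X_{i-1}(t)); write ∂x_i/∂x_j(t) for the j-th partial derivative of G_i evaluated at (X_1(t), ..., X_{i-1}(t)). Then for every 2 ≤ i ≤ n and every t ∈ ℝ, the total derivative of X_i admits the path-sum expansion X_i'(t) = ∑_P ∏_{j=0}^{k-1} ∂x_{p_{j+1}}/∂x_{p_j}(t), where the sum ranges over all strictly increasing finite sequences P = (p_0, p_1, ..., p_k) of integers with k ≥ 1, p_0 = 1, and p_k = i. -/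
/-- The partial derivative `∂x_i/∂x_j (t)` of the level-`i` best response `G i`
with respect to its `j`-th argument (levels are `1`-based), evaluated along the
trajectory `(X 1 t, …, X (i-1) t)`; junk value `0` when `j - 1 ≥ i - 1`. -/
noncomputable def partialDeriv' (G : (i : ℕ) → (Fin (i - 1) → ℝ) → ℝ)
    (X : ℕ → ℝ → ℝ) (i j : ℕ) (t : ℝ) : ℝ :=
  if h : j - 1 < i - 1 then
    fderiv ℝ (G i) (fun k : Fin (i - 1) => X (k.val + 1) t) (Pi.single ⟨j - 1, h⟩ 1)
  else 0

/-- The product `∏_{j=0}^{k-1} ∂x_{p_{j+1}}/∂x_{p_j} (t)` along the strictly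
increasing path whose vertex set is the finset `s`, i.e. the product of
`partialDeriv'` over consecutive pairs of the sorted list of `s`. -/
noncomputable def pathProduct (G : (i : ℕ) → (Fin (i - 1) → ℝ) → ℝ)
    (X : ℕ → ℝ → ℝ) (s : Finset ℕ) (t : ℝ) : ℝ :=
  let l := Finset.sort s (· ≤ ·)
  ((l.zip l.tail).map (fun p => partialDeriv' G X p.2 p.1 t)).prod

/-!
By the chain rule, `X_i' = ∑_{1 ≤ j < i} ∂x_i/∂x_j · X_j'` with `X_1' = 1`. Classifying the
increasing paths from `1` to `i` by their last intermediate vertex `j` (with `j = 1` for the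
direct edge) shows that the path sums satisfy the same recursion, so the two agree by strong
induction on `i`.
-/

open Finset

theorem ContinuousLinearMap.apply_eq_sum_mul_single {ι : Type*} [Fintype ι] [DecidableEq ι]
    (L : (ι → ℝ) →L[ℝ] ℝ) (v : ι → ℝ) : L v = ∑ k, v k * L (Pi.single k 1) := by
  conv_lhs => rw [← Finset.univ_sum_single v]
  refine (map_sum L _ _).trans (Finset.sum_congr rfl fun k _ => ?_)
  rw [← smul_eq_mul, ← map_smul, ← Pi.single_smul', smul_eq_mul, mul_one]

theorem List.zip_tail_append_singleton {α : Type*} (x : α) (l : List α) (a : α) :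
    (x :: l ++ [a]).zip (x :: l ++ [a]).tail
      = (x :: l).zip l ++ [((x :: l).getLast (List.cons_ne_nil x l), a)] := by
  induction l generalizing x with
  | nil => rfl
  | cons y l ih =>
    simp only [List.cons_append, List.tail_cons, List.zip_cons_cons, List.getLast_cons_cons] at ih ⊢
    rw [ih]

theorem Finset.sort_insert_of_forall_lt {α : Type*} [LinearOrder α] {s : Finset α} {a : α}
    (h : ∀ b ∈ s, b < a) :
    (insert a s).sort (· ≤ ·) = s.sort (· ≤ ·) ++ [a] := by
  have hnodup : (s.sort (· ≤ ·) ++ [a]).Nodup :=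
    List.nodup_append.2 ⟨s.sort_nodup (· ≤ ·), List.nodup_singleton a, by
      simpa using fun b hb => (h b hb).ne⟩
  rw [← (List.toFinset_sort (· ≤ ·) hnodup).2]
  · congr 1; ext; simp
  · exact List.pairwise_append.2 ⟨s.pairwise_sort _, List.pairwise_singleton _ a,
      fun b hb c hc => by
        rw [List.mem_singleton.1 hc]; exact (h b ((mem_sort _).1 hb)).le⟩

theorem Finset.sum_powerset_Ioo_eq_add_sum_max {M : Type*} [AddCommMonoid M]
    (f : Finset ℕ → M) (a b : ℕ) :
    ∑ s ∈ (Ioo a b).powerset, f s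
      = f ∅ + ∑ j ∈ Ioo a b, ∑ s ∈ (Ioo a j).powerset, f (insert j s) := by
  induction b with
  | zero => simp
  | succ b ih =>
    rw [← Order.succ_eq_add_one, Ioo_succ_right_eq_Ioc]
    rcases le_or_gt b a with hba | hab
    · simp [Ioc_eq_empty_of_le hba]
    · rw [← Ioo_insert_right hab, sum_powerset_insert (by simp), ih, sum_insert (by simp)]
      abel

theorem Finset.getLast_sort_eq_max' {α : Type*} [LinearOrder α] {s : Finset α}
    (h : s.sort (· ≤ ·) ≠ []) :
    (s.sort (· ≤ ·)).getLast h = s.max' (by simpa [← List.length_pos_iff] using h) := by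
  rw [max'_eq_sorted_last, List.getLast_eq_getElem]

theorem pathProduct_insert_of_forall_lt (G : (i : ℕ) → (Fin (i - 1) → ℝ) → ℝ)
    (X : ℕ → ℝ → ℝ) (t : ℝ) {u : Finset ℕ} (hu : u.Nonempty) {a : ℕ} (h : ∀ b ∈ u, b < a) :
    pathProduct G X (insert a u) t = pathProduct G X u t * partialDeriv' G X a (u.max' hu) t := by
  have hne : u.sort (· ≤ ·) ≠ [] := by simpa [← List.length_pos_iff] using hu
  obtain ⟨x, l, hl⟩ := List.exists_cons_of_ne_nil hne
  have hlast := getLast_sort_eq_max' hne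
  simp only [hl] at hlast
  simp only [pathProduct, sort_insert_of_forall_lt h, hl, List.zip_tail_append_singleton,
    List.map_append, List.prod_append, hlast]
  simp

noncomputable def pathSum (G : (i : ℕ) → (Fin (i - 1) → ℝ) → ℝ) (X : ℕ → ℝ → ℝ) (i : ℕ)
    (t : ℝ) : ℝ :=
  ∑ s ∈ (Ioo 1 i).powerset, pathProduct G X (insert 1 (insert i s)) t

theorem pathSum_eq_add_sum (G : (i : ℕ) → (Fin (i - 1) → ℝ) → ℝ) (X : ℕ → ℝ → ℝ) (t : ℝ)
    {i : ℕ} (hi : 1 < i) :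
    pathSum G X i t
      = partialDeriv' G X i 1 t + ∑ j ∈ Ioo 1 i, partialDeriv' G X i j t * pathSum G X j t := by
  rw [pathSum, sum_powerset_Ioo_eq_add_sum_max]
  congr 1
  · rw [insert_empty_eq, pair_comm,
      pathProduct_insert_of_forall_lt G X t (singleton_nonempty 1) (by simpa using hi)]
    simp [pathProduct]
  · refine sum_congr rfl fun j hj => ?_
    rw [mem_Ioo] at hj
    rw [pathSum, mul_sum]
    refine sum_congr rfl fun s hs => ?_
    have hs' : ∀ b ∈ s, 1 < b ∧ b < j := fun b hb => mem_Ioo.1 (mem_powerset.1 hs hb)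
    have hmax : (insert 1 (insert j s)).max' (insert_nonempty _ _) = j :=
      le_antisymm (max'_le _ _ _ fun b hb => by grind) (le_max' _ _ (by simp))
    rw [insert_comm 1 i,
      pathProduct_insert_of_forall_lt G X t (insert_nonempty _ _) (fun b hb => by grind), hmax,
      mul_comm]

theorem partialDeriv'_succ (G : (i : ℕ) → (Fin (i - 1) → ℝ) → ℝ) (X : ℕ → ℝ → ℝ) {i : ℕ}
    (k : Fin (i - 1)) (t : ℝ) :
    partialDeriv' G X i (k + 1) t
      = fderiv ℝ (G i) (fun k : Fin (i - 1) => X (k.val + 1) t) (Pi.single k 1) := by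
  rw [partialDeriv', dif_pos (by omega)]
  rfl

section Trajectory

variable {n : ℕ} {G : (i : ℕ) → (Fin (i - 1) → ℝ) → ℝ} {X : ℕ → ℝ → ℝ}

theorem differentiable_trajectory (hG : ∀ i, 2 ≤ i → i ≤ n → Differentiable ℝ (G i))
    (hX1 : ∀ t, X 1 t = t)
    (hXi : ∀ i, 2 ≤ i → i ≤ n → ∀ t, X i t = G i (fun k : Fin (i - 1) => X (k.val + 1) t))
    {j : ℕ} (hj1 : 1 ≤ j) (hjn : j ≤ n) :
    Differentiable ℝ (X j) := by
  induction j using Nat.strong_induction_on with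
  | _ j ih =>
    rcases hj1.eq_or_lt with rfl | hj2
    · rw [funext hX1]
      exact differentiable_id
    · rw [funext (hXi j hj2 hjn)]
      exact (hG j hj2 hjn).comp
        (differentiable_pi.2 fun k => ih _ (by omega) (by omega) (by omega))

theorem deriv_trajectory_eq_sum (hG : ∀ i, 2 ≤ i → i ≤ n → Differentiable ℝ (G i))
    (hX1 : ∀ t, X 1 t = t)
    (hXi : ∀ i, 2 ≤ i → i ≤ n → ∀ t, X i t = G i (fun k : Fin (i - 1) => X (k.val + 1) t))
    {i : ℕ} (hi2 : 2 ≤ i) (hin : i ≤ n) (t : ℝ) :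
    deriv (X i) t = ∑ j ∈ Ico 1 i, partialDeriv' G X i j t * deriv (X j) t := by
  have hY : HasDerivAt (fun t (k : Fin (i - 1)) => X (k + 1) t)
      (fun k => deriv (X (k + 1)) t) t :=
    hasDerivAt_pi.2 fun k =>
      (differentiable_trajectory hG hX1 hXi (by omega) (by omega) t).hasDerivAt
  have hXi' : HasDerivAt (fun t => G i fun k : Fin (i - 1) => X (k + 1) t) _ t :=
    (hG i hi2 hin _).hasFDerivAt.comp_hasDerivAt t hY
  rw [funext (hXi i hi2 hin), hXi'.deriv,
    ContinuousLinearMap.apply_eq_sum_mul_single, sum_Ico_eq_sum_range,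
    ← Fin.sum_univ_eq_sum_range]
  refine sum_congr rfl fun k _ => ?_
  rw [add_comm 1, partialDeriv'_succ, mul_comm]

end Trajectory

theorem total_derivative_path_sum_general
    (n : ℕ)
    (G : (i : ℕ) → (Fin (i - 1) → ℝ) → ℝ)
    (hG : ∀ i, 2 ≤ i → i ≤ n → ContDiff ℝ 1 (G i))
    (X : ℕ → ℝ → ℝ)
    (hX1 : ∀ t, X 1 t = t)
    (hXi : ∀ i, 2 ≤ i → i ≤ n → ∀ t,
      X i t = G i (fun k : Fin (i - 1) => X (k.val + 1) t)) :
    ∀ i, 2 ≤ i → i ≤ n → ∀ t : ℝ,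
      deriv (X i) t
        = ∑ s ∈ (Finset.Ioo 1 i).powerset,
            pathProduct G X (insert 1 (insert i s)) t := by
  have hGd i (hi2 : 2 ≤ i) (hin : i ≤ n) : Differentiable ℝ (G i) :=
    (hG i hi2 hin).differentiable one_ne_zero
  have hX1' t : deriv (X 1) t = 1 := by rw [funext hX1, deriv_id'']
  intro i
  induction i using Nat.strong_induction_on with
  | _ i ih =>
    intro hi2 hin t
    change _ = pathSum G X i t
    rw [deriv_trajectory_eq_sum hGd hX1 hXi hi2 hin, ← Ioo_insert_left (by omega : 1 < i),
      sum_insert (by simp), hX1', mul_one, pathSum_eq_add_sum G X t (by omega)]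
    congr 1
    refine sum_congr rfl fun j hj => ?_
    rw [mem_Ioo] at hj
    rw [ih j hj.2 (by omega) (by omega) t, pathSum]

/-- **Path-sum expansion of the total derivative `dx_i/dx_1` (Equation (2)).**
In an `n`-level hierarchical system with `X 1 t = t` and
`X i t = G i (X 1 t, …, X (i-1) t)`, the total derivative of `X i` equals the
sum, over all strictly increasing paths `1 = p_0 < p_1 < ⋯ < p_k = i` (`k ≥ 1`,
equivalently over all subsets of the open interval `(1, i)` of intermediate
vertices), of the products of the partial derivatives along the path. -/
theorem total_derivative_path_sum
    (n : ℕ) (hn : 2 ≤ n)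
    (G : (i : ℕ) → (Fin (i - 1) → ℝ) → ℝ)
    (hG : ∀ i, 2 ≤ i → i ≤ n → ContDiff ℝ 1 (G i))
    (X : ℕ → ℝ → ℝ)
    (hX1 : ∀ t, X 1 t = t)
    (hXi : ∀ i, 2 ≤ i → i ≤ n → ∀ t,
      X i t = G i (fun k : Fin (i - 1) => X (k.val + 1) t)) :
    ∀ i, 2 ≤ i → i ≤ n → ∀ t : ℝ,
      deriv (X i) t
        = ∑ s ∈ (Finset.Ioo 1 i).powerset,
            pathProduct G X (insert 1 (insert i s)) t :=
  total_derivative_path_sum_general n G hG X hX1 hXi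
end
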